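/- If A = {x ∈ ℝⁿ | E x ≤ f} is a polyhedron given by finitely many affine inequalities (rows eᵢᵀx ≤ fᵢ) and B ⊆ ℝⁿ is nonempty and bounded, then A ⊖ B = {x | E x ≤ f − σ}, where σᵢ = sup_{b ∈ B} eᵢᵀ b. -/

import Mathlib

def pontryaginDiff {n : ℕ} (A B : Set (Fin n → ℝ)) : Set (Fin n → ℝ) :=
  {a | ∀ b ∈ B, a + b ∈ A}

theorem pontryaginDiff_polyhedron {n q : ℕ} (E : Matrix (Fin q) (Fin n) ℝ) (f : Fin q → ℝ)
    (A B : Set (Fin n → ℝ)) (hA : A = {x | ∀ i, dotProduct (E i) x ≤ f i})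
    (hBne : B.Nonempty) (hBbd : Bornology.IsBounded B) :
    pontryaginDiff A B =
      {x | ∀ i, dotProduct (E i) x ≤
        f i - sSup ((fun b => dotProduct (E i) b) '' B)} := by
  have hbdd : ∀ i, BddAbove ((fun b => dotProduct (E i) b) '' B) := by
    intro i
    obtain ⟨C, hC⟩ := hBbd.subset_closedBall 0
    refine ⟨(∑ j, |E i j|) * C, ?_⟩
    rintro _ ⟨b, hb, rfl⟩
    have hbC : ∀ j, |b j| ≤ C := by
      intro j
      have := hC hb
      simp only [Metric.mem_closedBall, dist_zero_right] at this
      calc |b j| = ‖b j‖ := rfl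
        _ ≤ ‖b‖ := norm_le_pi_norm b j
        _ ≤ C := this
    calc dotProduct (E i) b = ∑ j, E i j * b j := rfl
      _ ≤ ∑ j, |E i j| * C := by
          apply Finset.sum_le_sum
          intro j _
          calc E i j * b j ≤ |E i j * b j| := le_abs_self _
            _ = |E i j| * |b j| := abs_mul _ _
            _ ≤ |E i j| * C := by
                have := hbC j
                nlinarith [abs_nonneg (E i j), abs_nonneg (b j)]
      _ = (∑ j, |E i j|) * C := by rw [Finset.sum_mul]
  ext x
  simp only [pontryaginDiff, hA, Set.mem_setOf_eq]
  constructor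
  · intro h i
    rw [le_sub_iff_add_le, add_comm, ← le_sub_iff_add_le]
    apply csSup_le (hBne.image _)
    rintro _ ⟨b, hb, rfl⟩
    have := h b hb i
    rw [dotProduct_add] at this
    linarith
  · intro h b hb i
    rw [dotProduct_add]
    have hle : dotProduct (E i) b ≤ sSup ((fun b => dotProduct (E i) b) '' B) :=
      le_csSup (hbdd i) ⟨b, hb, rfl⟩
    have := h i
    linarith
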